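/- Let ψ ∈ ℝ. For r > 1, t > 0, ε > 0 define D_ε[ψ](r,t) = −(2ψ/(r√π)) ∫₀ᵗ e^{-s} ∫₀^{(r−1)√ε/(2√(t−s))} e^{-z²} dz ds. Then |D_ε[ψ](r,t)| ≤ C √(εt) |ψ| with C = 2/√π, for all r > 1, t > 0, ε > 0. -/

import Mathlib

open Real MeasureTheory

/-- The Duhamel term for constant boundary data in the exterior-ball problem. -/
noncomputable def De (ψ ε r t : ℝ) : ℝ :=
  -(2 * ψ / (r * Real.sqrt π)) *
    ∫ s in (0:ℝ)..t, Real.exp (-s) *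
      ∫ z in (0:ℝ)..((r - 1) * Real.sqrt ε / (2 * Real.sqrt (t - s))), Real.exp (-z ^ 2)

/-!
Bounding `e^{-s} ≤ 1` and `∫₀^L e^{-z²} dz ≤ L` reduces the double integral to
`((r - 1)√ε / 2) ∫₀ᵗ (t - s)^{-1/2} ds = (r - 1)√(εt)`; the prefactor `1/r` then absorbs `r - 1`.
-/

lemma integral_exp_neg_sq_nonneg {L : ℝ} (hL : 0 ≤ L) :
    0 ≤ ∫ z in (0:ℝ)..L, exp (-z ^ 2) :=
  intervalIntegral.integral_nonneg hL fun _ _ => (exp_pos _).le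

lemma integral_exp_neg_sq_le {L : ℝ} (hL : 0 ≤ L) :
    ∫ z in (0:ℝ)..L, exp (-z ^ 2) ≤ L := by
  calc ∫ z in (0:ℝ)..L, exp (-z ^ 2) ≤ ∫ _ in (0:ℝ)..L, (1:ℝ) :=
        intervalIntegral.integral_mono_on hL (Continuous.intervalIntegrable (by fun_prop) _ _)
          intervalIntegrable_const fun z _ => exp_le_one_iff.mpr (neg_nonpos.mpr (sq_nonneg z))
    _ = L := by simp

lemma inv_sqrt_eq_rpow_neg_half {x : ℝ} (hx : 0 ≤ x) : (√x)⁻¹ = x ^ (-(1 / 2) : ℝ) := by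
  rw [rpow_neg hx, sqrt_eq_rpow]

lemma intervalIntegrable_inv_sqrt_sub {t : ℝ} (ht : 0 ≤ t) :
    IntervalIntegrable (fun s => (√(t - s))⁻¹) volume 0 t := by
  have h := (intervalIntegral.intervalIntegrable_rpow' (a := 0) (b := t)
    (r := -(1 / 2)) (by norm_num)).comp_sub_left t
  simp only [sub_zero, sub_self] at h
  refine h.symm.congr fun s hs => ?_
  rw [Set.uIoc_of_le ht] at hs
  exact (inv_sqrt_eq_rpow_neg_half (sub_nonneg.mpr hs.2)).symm

lemma integral_inv_sqrt_sub {t : ℝ} (ht : 0 ≤ t) :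
    ∫ s in (0:ℝ)..t, (√(t - s))⁻¹ = 2 * √t := by
  rw [intervalIntegral.integral_comp_sub_left (fun x => (√x)⁻¹) t]
  simp only [sub_zero, sub_self]
  rw [intervalIntegral.integral_congr fun x hx => inv_sqrt_eq_rpow_neg_half ?_,
    integral_rpow (Or.inl (by norm_num)), sqrt_eq_rpow]
  · norm_num
    ring
  · rw [Set.uIcc_of_le ht] at hx
    exact hx.1

lemma abs_integral_exp_neg_mul_integral_exp_neg_sq_le {c t : ℝ} (hc : 0 ≤ c) (ht : 0 ≤ t) :
    |∫ s in (0:ℝ)..t, exp (-s) * ∫ z in (0:ℝ)..(c / (2 * √(t - s))), exp (-z ^ 2)|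
      ≤ c * √t := by
  have hbound : ∀ s ∈ Set.uIoc 0 t,
      ‖exp (-s) * ∫ z in (0:ℝ)..(c / (2 * √(t - s))), exp (-z ^ 2)‖
        ≤ c / 2 * (√(t - s))⁻¹ := by
    intro s hs
    rw [Set.uIoc_of_le ht] at hs
    have hL : 0 ≤ c / (2 * √(t - s)) := by positivity
    have hI := integral_exp_neg_sq_nonneg hL
    rw [norm_mul, norm_of_nonneg (exp_pos _).le, norm_of_nonneg hI]
    calc exp (-s) * ∫ z in (0:ℝ)..(c / (2 * √(t - s))), exp (-z ^ 2)
        ≤ ∫ z in (0:ℝ)..(c / (2 * √(t - s))), exp (-z ^ 2) :=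
          mul_le_of_le_one_left hI (exp_le_one_iff.mpr (by linarith [hs.1]))
      _ ≤ c / (2 * √(t - s)) := integral_exp_neg_sq_le hL
      _ = c / 2 * (√(t - s))⁻¹ := by ring
  have h := intervalIntegral.norm_integral_le_abs_of_norm_le
    ((ae_restrict_iff' measurableSet_uIoc).mpr (Filter.Eventually.of_forall hbound))
    ((intervalIntegrable_inv_sqrt_sub ht).const_mul (c / 2))
  rw [intervalIntegral.integral_const_mul, integral_inv_sqrt_sub ht] at h
  calc _ ≤ |c / 2 * (2 * √t)| := h
    _ = c * √t := by rw [abs_of_nonneg (by positivity)]; ring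

theorem stmt_9 (ψ : ℝ) :
    ∀ r t ε : ℝ, 1 < r → 0 < t → 0 < ε →
      |De ψ ε r t| ≤ (2 / Real.sqrt π) * Real.sqrt (ε * t) * |ψ| := by
  intro r t ε hr ht hε
  have hr0 : 0 < r := by linarith
  have hJ := abs_integral_exp_neg_mul_integral_exp_neg_sq_le
    (mul_nonneg (sub_nonneg.mpr hr.le) (sqrt_nonneg ε)) ht.le
  have hfrac : (r - 1) / r ≤ 1 := (div_le_one hr0).mpr (by linarith)
  rw [De, abs_mul, abs_neg, abs_div, abs_mul, abs_of_pos (by positivity : 0 < r * √π),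
    abs_two, sqrt_mul hε.le]
  calc 2 * |ψ| / (r * √π) * |_| ≤ 2 * |ψ| / (r * √π) * ((r - 1) * √ε * √t) :=
        mul_le_mul_of_nonneg_left hJ (by positivity)
    _ = 2 / √π * (√ε * √t) * |ψ| * ((r - 1) / r) := by field_simp
    _ ≤ 2 / √π * (√ε * √t) * |ψ| := mul_le_of_le_one_right (by positivity) hfrac
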